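/- Fix an integer k ≥ 2, reals α > −1/2, γ > −1 and m ≥ 1. Let Ŝ_n^{(α+1,γ)} be the monic generalized ultraspherical polynomials with parameters (α+1, γ), put W(z) := z·Ŝ_{2m}^{(α+1,γ)}(z) − (2m/(2α+γ+4m))·Ŝ_{2m−1}^{(α+1,γ)}(z), and define D(z) := W(T_k(z)) and N(z) := U_{k−1}(z)·Ŝ_{2m}^{(α+1,γ)}(T_k(z)), where T_k and U_{k−1} are the Chebyshev polynomials of the first and second kind. Then every real root z₀ of D satisfies: k·(2m+1+γ)·N(z₀) = (γ+1)·D'(z₀) if T_k(z₀) = 0, and k·(2m+1+γ)·N(z₀) = D'(z₀) if T_k(z₀) ≠ 0. In other words, the reversed measure ξ_{α,γ,k(2m+1)−1}^{R}, whose Stieltjes transform is N/D, has masses (γ+1)/(k(2m+1+γ)) at the zeros of T_k and equal masses 1/(k(2m+1+γ)) at its remaining 2mk support points. -/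

import Mathlib

open Polynomial

/-- The recurrence coefficients `γ_n^{(α,γ)}` of the monic generalized ultraspherical
polynomials: `γ_{2m}^{(α,γ)} = (2m-1+γ)(2m-2+2α+γ)/((4m-4+2α+γ)(4m-2+2α+γ))` and
`γ_{2m+1}^{(α,γ)} = 2m(2m+2α-1)/((4m-2+2α+γ)(4m+2α+γ))`. -/
noncomputable def gammaCoef (α γ : ℝ) (n : ℕ) : ℝ :=
  if Even n then
    ((n : ℝ) - 1 + γ) * ((n : ℝ) - 2 + 2 * α + γ) /
      ((2 * (n : ℝ) - 4 + 2 * α + γ) * (2 * (n : ℝ) - 2 + 2 * α + γ))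
  else
    ((n : ℝ) - 1) * ((n : ℝ) - 2 + 2 * α) /
      ((2 * (n : ℝ) - 4 + 2 * α + γ) * (2 * (n : ℝ) - 2 + 2 * α + γ))

/-- The monic generalized ultraspherical polynomials `Ŝ_n^{(α,γ)}`, orthogonal with respect
to `|x|^γ (1-x²)^{α-1/2}` on `[-1,1]`: `Ŝ 0 = 1`, `Ŝ 1 = X` and
`Ŝ_{n+1}(x) = x · Ŝ_n(x) - γ_{n+1}^{(α,γ)} · Ŝ_{n-1}(x)`. -/
noncomputable def genUltra (α γ : ℝ) : ℕ → Polynomial ℝ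
  | 0 => 1
  | 1 => Polynomial.X
  | n + 2 =>
      Polynomial.X * genUltra α γ (n + 1) -
        Polynomial.C (gammaCoef α γ (n + 2)) * genUltra α γ n

/-!
Write `Ŝ` for `Ŝ^{(b,γ)}`. From the three-term recurrence one proves, jointly by induction on `j`,
the first-order differential relations
`x² Ŝ'_{2j+2} = (2j+2) x Ŝ_{2j+2} + (2j+2)/(2b+γ+4j+2) · (x Ŝ'_{2j+1} + γ Ŝ_{2j+1})` and
`x² Ŝ'_{2j+3} = (2j+3) x Ŝ_{2j+3} + (2j+3+γ)/(2b+γ+4j+4) · x Ŝ'_{2j+2}`.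
For `b = α + 1` the first one says that `W` satisfies `x W' + γ W = (2m+1+γ) x Ŝ_{2m}`.
Since `D' = k U_{k-1} · W'(T_k)` and `W(T_k(z₀)) = 0`, evaluating this identity at `t = T_k(z₀) ≠ 0`
gives `W'(t) = (2m+1+γ) Ŝ_{2m}(t)`, while differentiating it at `t = 0` gives
`(1+γ) W'(0) = (2m+1+γ) Ŝ_{2m}(0)`.
-/

lemma gammaCoef_two_mul_add_two (b γ : ℝ) (j : ℕ) :
    gammaCoef b γ (2 * j + 2) =
      (2 * j + 1 + γ) * (2 * j + 2 * b + γ) / ((2 * b + γ + 4 * j) * (2 * b + γ + 4 * j + 2)) := by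
  rw [gammaCoef, if_pos ⟨j + 1, by ring⟩]
  push_cast
  ring_nf

lemma gammaCoef_two_mul_add_three (b γ : ℝ) (j : ℕ) :
    gammaCoef b γ (2 * j + 3) =
      (2 * j + 2) * (2 * j + 1 + 2 * b) / ((2 * b + γ + 4 * j + 2) * (2 * b + γ + 4 * j + 4)) := by
  rw [gammaCoef, if_neg (by simp [parity_simps])]
  push_cast
  ring_nf

lemma gammaCoef_two_mul_add_four (b γ : ℝ) (j : ℕ) :
    gammaCoef b γ (2 * j + 4) = (2 * j + 3 + γ) * (2 * j + 2 + 2 * b + γ) /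
      ((2 * b + γ + 4 * j + 4) * (2 * b + γ + 4 * j + 6)) := by
  rw [show 2 * j + 4 = 2 * (j + 1) + 2 by ring, gammaCoef_two_mul_add_two]
  push_cast
  ring_nf

lemma gammaCoef_two_mul_add_five (b γ : ℝ) (j : ℕ) :
    gammaCoef b γ (2 * j + 5) = (2 * j + 4) * (2 * j + 3 + 2 * b) /
      ((2 * b + γ + 4 * j + 6) * (2 * b + γ + 4 * j + 8)) := by
  rw [show 2 * j + 5 = 2 * (j + 1) + 3 by ring, gammaCoef_two_mul_add_three]
  push_cast
  ring_nf

section DifferentialRelations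

variable {b γ : ℝ}

local notation "𝒮" => genUltra b γ

lemma X_sq_mul_derivative_genUltra_two (hpos : 0 < 2 * b + γ) :
    X ^ 2 * derivative (𝒮 2) =
      C 2 * (X * 𝒮 2) + C (2 / (2 * b + γ + 2)) * (X * derivative (𝒮 1) + C γ * 𝒮 1) := by
  have hg : gammaCoef b γ 2 * 2 = 2 / (2 * b + γ + 2) * (1 + γ) := by
    have h := gammaCoef_two_mul_add_two b γ 0
    norm_num at h
    rw [h]
    field_simp
  have hS2 : 𝒮 2 = X * X - C (gammaCoef b γ 2) := by simp [genUltra]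
  rw [hS2, show 𝒮 1 = X from rfl]
  simp only [derivative_sub, derivative_mul, derivative_X, derivative_C]
  have hC := congrArg C hg
  simp only [map_mul, map_add, map_ofNat, map_one] at hC ⊢
  linear_combination (X : ℝ[X]) * hC

lemma X_sq_mul_derivative_genUltra_three (hpos : 0 < 2 * b + γ) :
    X ^ 2 * derivative (𝒮 3) =
      C 3 * (X * 𝒮 3) + C ((3 + γ) / (2 * b + γ + 4)) * (X * derivative (𝒮 2)) := by
  have hg : 2 * (gammaCoef b γ 2 + gammaCoef b γ 3) = 2 * ((3 + γ) / (2 * b + γ + 4)) := by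
    have h2 := gammaCoef_two_mul_add_two b γ 0
    have h3 := gammaCoef_two_mul_add_three b γ 0
    norm_num at h2 h3
    rw [h2, h3]
    have : 2 * b + γ + 2 ≠ 0 := by linarith
    have : 2 * b + γ + 4 ≠ 0 := by linarith
    field_simp
    ring
  have hS2 : 𝒮 2 = X * X - C (gammaCoef b γ 2) := by simp [genUltra]
  have hS3 : 𝒮 3 = X * 𝒮 2 - C (gammaCoef b γ 3) * X := rfl
  rw [hS3, hS2]
  simp only [derivative_sub, derivative_mul, derivative_X, derivative_C]
  have hC := congrArg C hg
  simp only [map_mul, map_add, map_ofNat] at hC ⊢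
  linear_combination (X ^ 2 : ℝ[X]) * hC

lemma X_sq_mul_derivative_genUltra_even_step (hpos : 0 < 2 * b + γ) (j : ℕ)
    (hA : X ^ 2 * derivative (𝒮 (2 * j + 2)) =
      C (2 * j + 2 : ℝ) * (X * 𝒮 (2 * j + 2)) +
        C ((2 * j + 2) / (2 * b + γ + 4 * j + 2)) *
          (X * derivative (𝒮 (2 * j + 1)) + C γ * 𝒮 (2 * j + 1)))
    (hB : X ^ 2 * derivative (𝒮 (2 * j + 3)) =
      C (2 * j + 3 : ℝ) * (X * 𝒮 (2 * j + 3)) +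
        C ((2 * j + 3 + γ) / (2 * b + γ + 4 * j + 4)) * (X * derivative (𝒮 (2 * j + 2)))) :
    X ^ 2 * derivative (𝒮 (2 * j + 4)) =
      C (2 * j + 4 : ℝ) * (X * 𝒮 (2 * j + 4)) +
        C ((2 * j + 4) / (2 * b + γ + 4 * j + 6)) *
          (X * derivative (𝒮 (2 * j + 3)) + C γ * 𝒮 (2 * j + 3)) := by
  set c := (2 * j + 2) / (2 * b + γ + 4 * j + 2) with hc
  set d := (2 * j + 3 + γ) / (2 * b + γ + 4 * j + 4) with hd
  set c' := (2 * j + 4) / (2 * b + γ + 4 * j + 6) with hc'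
  set g₃ := gammaCoef b γ (2 * j + 3) with hg₃
  set g₄ := gammaCoef b γ (2 * j + 4) with hg₄
  have hj : (0 : ℝ) ≤ j := j.cast_nonneg
  have h₂ : 2 * b + γ + 4 * j + 2 ≠ 0 := by linarith
  have h₄ : 2 * b + γ + 4 * j + 4 ≠ 0 := by linarith
  have h₆ : 2 * b + γ + 4 * j + 6 ≠ 0 := by linarith
  have e₁ : (2 * j + 2) * (d - g₄ - c') + (2 * j + 4) * g₄ - c' * (1 + γ) = 0 := by
    rw [hg₄, gammaCoef_two_mul_add_four, hd, hc']
    field_simp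
    ring
  have e₂ : c' * g₃ + c * (d - g₄ - c') = 0 := by
    rw [hg₄, gammaCoef_two_mul_add_four, hg₃, gammaCoef_two_mul_add_three, hd, hc', hc]
    field_simp
    ring
  have hS₄ : 𝒮 (2 * j + 4) = X * 𝒮 (2 * j + 3) - C g₄ * 𝒮 (2 * j + 2) := rfl
  have hS₃ : 𝒮 (2 * j + 3) = X * 𝒮 (2 * j + 2) - C g₃ * 𝒮 (2 * j + 1) := rfl
  rw [hS₃] at hB
  rw [hS₄, hS₃]
  simp only [derivative_sub, derivative_mul, derivative_X, derivative_C] at hB ⊢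
  have hC₁ := congrArg C e₁
  have hC₂ := congrArg C e₂
  simp only [map_mul, map_add, map_sub, map_ofNat, map_one, map_zero, map_natCast] at hC₁ hC₂ hA hB ⊢
  -- After expanding by the recurrence, `X · hB` and a multiple of `hA` leave multiples of
  -- `X Ŝ_{2j+2}` and `X Ŝ'_{2j+1} + γ Ŝ_{2j+1}` whose coefficients are `e₁` and `e₂`.
  linear_combination (X : ℝ[X]) * hB + (C d - C g₄ - C c') * hA +
    (X * 𝒮 (2 * j + 2)) * hC₁ + (X * derivative (𝒮 (2 * j + 1)) + C γ * 𝒮 (2 * j + 1)) * hC₂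

lemma X_sq_mul_derivative_genUltra_odd_step (hpos : 0 < 2 * b + γ) (j : ℕ)
    (hB : X ^ 2 * derivative (𝒮 (2 * j + 3)) =
      C (2 * j + 3 : ℝ) * (X * 𝒮 (2 * j + 3)) +
        C ((2 * j + 3 + γ) / (2 * b + γ + 4 * j + 4)) * (X * derivative (𝒮 (2 * j + 2))))
    (hA : X ^ 2 * derivative (𝒮 (2 * j + 4)) =
      C (2 * j + 4 : ℝ) * (X * 𝒮 (2 * j + 4)) +
        C ((2 * j + 4) / (2 * b + γ + 4 * j + 6)) *
          (X * derivative (𝒮 (2 * j + 3)) + C γ * 𝒮 (2 * j + 3))) :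
    X ^ 2 * derivative (𝒮 (2 * j + 5)) =
      C (2 * j + 5 : ℝ) * (X * 𝒮 (2 * j + 5)) +
        C ((2 * j + 5 + γ) / (2 * b + γ + 4 * j + 8)) * (X * derivative (𝒮 (2 * j + 4))) := by
  set d := (2 * j + 3 + γ) / (2 * b + γ + 4 * j + 4) with hd
  set c' := (2 * j + 4) / (2 * b + γ + 4 * j + 6) with hc'
  set d' := (2 * j + 5 + γ) / (2 * b + γ + 4 * j + 8) with hd'
  set g₄ := gammaCoef b γ (2 * j + 4) with hg₄
  set g₅ := gammaCoef b γ (2 * j + 5) with hg₅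
  have hj : (0 : ℝ) ≤ j := j.cast_nonneg
  have h₄ : 2 * b + γ + 4 * j + 4 ≠ 0 := by linarith
  have h₆ : 2 * b + γ + 4 * j + 6 ≠ 0 := by linarith
  have h₈ : 2 * b + γ + 4 * j + 8 ≠ 0 := by linarith
  have e₁ : 2 * g₅ + c' * (2 * j + 3 + γ) - (2 * j + 4) * d' = 0 := by
    rw [hg₅, gammaCoef_two_mul_add_five, hc', hd']
    field_simp
    ring
  have e₂ : d' * g₄ + d * (c' - g₅ - d') = 0 := by
    rw [hg₄, gammaCoef_two_mul_add_four, hg₅, gammaCoef_two_mul_add_five, hd, hc', hd']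
    field_simp
    ring
  have hS₅ : 𝒮 (2 * j + 5) = X * 𝒮 (2 * j + 4) - C g₅ * 𝒮 (2 * j + 3) := rfl
  have hS₄ : 𝒮 (2 * j + 4) = X * 𝒮 (2 * j + 3) - C g₄ * 𝒮 (2 * j + 2) := rfl
  rw [hS₄] at hA
  rw [hS₅, hS₄]
  simp only [derivative_sub, derivative_mul, derivative_X, derivative_C] at hA ⊢
  have hC₁ := congrArg C e₁
  have hC₂ := congrArg C e₂
  simp only [map_mul, map_add, map_sub, map_ofNat, map_zero, map_natCast] at hC₁ hC₂ hA hB ⊢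
  linear_combination (X : ℝ[X]) * hA + (C c' - C g₅ - C d') * hB +
    (X * 𝒮 (2 * j + 3)) * hC₁ + (X * derivative (𝒮 (2 * j + 2))) * hC₂

lemma X_sq_mul_derivative_genUltra (hpos : 0 < 2 * b + γ) (j : ℕ) :
    X ^ 2 * derivative (𝒮 (2 * j + 2)) =
      C (2 * j + 2 : ℝ) * (X * 𝒮 (2 * j + 2)) +
        C ((2 * j + 2) / (2 * b + γ + 4 * j + 2)) *
          (X * derivative (𝒮 (2 * j + 1)) + C γ * 𝒮 (2 * j + 1)) ∧
    X ^ 2 * derivative (𝒮 (2 * j + 3)) =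
      C (2 * j + 3 : ℝ) * (X * 𝒮 (2 * j + 3)) +
        C ((2 * j + 3 + γ) / (2 * b + γ + 4 * j + 4)) * (X * derivative (𝒮 (2 * j + 2))) := by
  induction j with
  | zero =>
    simpa using ⟨X_sq_mul_derivative_genUltra_two hpos, X_sq_mul_derivative_genUltra_three hpos⟩
  | succ j ih =>
    have hA := X_sq_mul_derivative_genUltra_even_step hpos j ih.1 ih.2
    have hB := X_sq_mul_derivative_genUltra_odd_step hpos j ih.2 hA
    rw [show 2 * (j + 1) + 1 = 2 * j + 3 by ring, show 2 * (j + 1) + 2 = 2 * j + 4 by ring,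
      show 2 * (j + 1) + 3 = 2 * j + 5 by ring]
    push_cast
    ring_nf at hA hB ⊢
    exact ⟨hA, hB⟩

end DifferentialRelations

lemma X_mul_derivative_add_C_mul_eq {α γ : ℝ} (hpos : 0 < 2 * α + γ + 2) (m : ℕ) {W : ℝ[X]}
    (hW : W = X * genUltra (α + 1) γ (2 * m) -
      C (2 * m / (2 * α + γ + 4 * m)) * genUltra (α + 1) γ (2 * m - 1)) :
    X * derivative W + C γ * W = C (2 * m + 1 + γ) * (X * genUltra (α + 1) γ (2 * m)) := by
  subst hW
  cases m with
  | zero =>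
    simp [genUltra, add_mul]
  | succ j =>
    have hA := (X_sq_mul_derivative_genUltra (b := α + 1) (γ := γ) (by linarith) j).1
    have hc : (2 * ((j + 1 : ℕ) : ℝ)) / (2 * α + γ + 4 * ((j + 1 : ℕ) : ℝ)) =
        (2 * j + 2) / (2 * (α + 1) + γ + 4 * j + 2) := by
      push_cast
      ring_nf
    rw [hc, show 2 * (j + 1) = 2 * j + 2 by ring, show 2 * j + 2 - 1 = 2 * j + 1 by omega]
    simp only [derivative_sub, derivative_mul, derivative_X, derivative_C]
    simp only [map_mul, map_add, map_ofNat, map_one, map_natCast] at hA ⊢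
    push_cast
    linear_combination hA

lemma eval_zero_derivative_of_X_mul_derivative_add_C_mul_eq {R : Type*} [CommRing R]
    {W S : R[X]} {γ c : R} (h : X * derivative W + C γ * W = C c * (X * S)) :
    (1 + γ) * (derivative W).eval 0 = c * S.eval 0 := by
  have h' := congrArg (fun p => (derivative p).eval 0) h
  simp only [derivative_add, derivative_mul, derivative_X, derivative_C, eval_add, eval_mul,
    eval_X, eval_C, eval_one, eval_zero] at h'
  linear_combination h'

lemma eval_derivative_of_X_mul_derivative_add_C_mul_eq {R : Type*} [CommRing R] [IsDomain R]
    {W S : R[X]} {γ c t : R} (h : X * derivative W + C γ * W = C c * (X * S))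
    (ht : t ≠ 0) (hWt : W.eval t = 0) :
    (derivative W).eval t = c * S.eval t := by
  have h' := congrArg (eval t) h
  simp only [eval_add, eval_mul, eval_X, eval_C, hWt, mul_zero, add_zero] at h'
  exact mul_left_cancel₀ ht (by linear_combination h')

theorem sieved_ultra_first_reversed_masses_general (k : ℕ)
    (α γ : ℝ) (hα : -(1 / 2 : ℝ) < α) (hγ : -1 < γ) (m : ℕ)
    (W D N : Polynomial ℝ)
    (hW : W = Polynomial.X * genUltra (α + 1) γ (2 * m) -
      Polynomial.C (2 * (m : ℝ) / (2 * α + γ + 4 * m)) * genUltra (α + 1) γ (2 * m - 1))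
    (hD : D = W.comp (Polynomial.Chebyshev.T ℝ (k : ℤ)))
    (hN : N = Polynomial.Chebyshev.U ℝ ((k : ℤ) - 1) *
      (genUltra (α + 1) γ (2 * m)).comp (Polynomial.Chebyshev.T ℝ (k : ℤ))) :
    ∀ z₀ : ℝ, D.eval z₀ = 0 →
      ((Polynomial.Chebyshev.T ℝ (k : ℤ)).eval z₀ = 0 →
        (k : ℝ) * (2 * (m : ℝ) + 1 + γ) * N.eval z₀ =
          (γ + 1) * (Polynomial.derivative D).eval z₀) ∧
      ((Polynomial.Chebyshev.T ℝ (k : ℤ)).eval z₀ ≠ 0 →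
        (k : ℝ) * (2 * (m : ℝ) + 1 + γ) * N.eval z₀ =
          (Polynomial.derivative D).eval z₀) := by
  intro z₀ hz
  set t := (Chebyshev.T ℝ k).eval z₀
  set u := (Chebyshev.U ℝ (k - 1)).eval z₀
  have hEuler := X_mul_derivative_add_C_mul_eq (by linarith) m hW
  have hWt : W.eval t = 0 := by rwa [hD, eval_comp] at hz
  have hD' : (derivative D).eval z₀ = k * u * (derivative W).eval t := by
    rw [hD, derivative_comp, Chebyshev.T_derivative_eq_U, eval_mul, eval_mul, eval_comp,
      eval_intCast, Int.cast_natCast]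
  have hN' : N.eval z₀ = u * (genUltra (α + 1) γ (2 * m)).eval t := by
    rw [hN, eval_mul, eval_comp]
  refine ⟨fun ht => ?_, fun ht => ?_⟩
  · rw [hN', hD', ht]
    linear_combination -(k * u) * eval_zero_derivative_of_X_mul_derivative_add_C_mul_eq hEuler
  · rw [hN', hD', eval_derivative_of_X_mul_derivative_add_C_mul_eq hEuler ht hWt]
    ring

/-- **Masses of the reversed measure for the generalized sieved ultraspherical polynomials
of the first kind (forward direction of Theorem 3.1).**  With
`W(z) := z · Ŝ_{2m}^{(α+1,γ)}(z) - (2m/(2α+γ+4m)) · Ŝ_{2m-1}^{(α+1,γ)}(z)`,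
`D(z) := W(T_k(z))` and `N(z) := U_{k-1}(z) · Ŝ_{2m}^{(α+1,γ)}(T_k(z))`, every real root
`z₀` of `D` satisfies `k·(2m+1+γ)·N(z₀) = (γ+1)·D'(z₀)` if `T_k(z₀) = 0` and
`k·(2m+1+γ)·N(z₀) = D'(z₀)` if `T_k(z₀) ≠ 0`.  That is, the reversed measure
`ξ_{α,γ,k(2m+1)-1}^R` with Stieltjes transform `N/D` has masses `(γ+1)/(k(2m+1+γ))` at the
zeros of `T_k` and equal masses `1/(k(2m+1+γ))` at its remaining `2mk` support points. -/
theorem sieved_ultra_first_reversed_masses (k : ℕ) (hk : 2 ≤ k)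
    (α γ : ℝ) (hα : -(1 / 2 : ℝ) < α) (hγ : -1 < γ) (m : ℕ) (hm : 1 ≤ m)
    (W D N : Polynomial ℝ)
    (hW : W = Polynomial.X * genUltra (α + 1) γ (2 * m) -
      Polynomial.C (2 * (m : ℝ) / (2 * α + γ + 4 * m)) * genUltra (α + 1) γ (2 * m - 1))
    (hD : D = W.comp (Polynomial.Chebyshev.T ℝ (k : ℤ)))
    (hN : N = Polynomial.Chebyshev.U ℝ ((k : ℤ) - 1) *
      (genUltra (α + 1) γ (2 * m)).comp (Polynomial.Chebyshev.T ℝ (k : ℤ))) :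
    ∀ z₀ : ℝ, D.eval z₀ = 0 →
      ((Polynomial.Chebyshev.T ℝ (k : ℤ)).eval z₀ = 0 →
        (k : ℝ) * (2 * (m : ℝ) + 1 + γ) * N.eval z₀ =
          (γ + 1) * (Polynomial.derivative D).eval z₀) ∧
      ((Polynomial.Chebyshev.T ℝ (k : ℤ)).eval z₀ ≠ 0 →
        (k : ℝ) * (2 * (m : ℝ) + 1 + γ) * N.eval z₀ =
          (Polynomial.derivative D).eval z₀) :=
  sieved_ultra_first_reversed_masses_general k α γ hα hγ m W D N hW hD hN
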